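/- Let E, F be vector lattices with F Dedekind complete. For abstract Uryson operators S, T : E → F and any f ∈ E, the supremum T ∨ S in the ordered vector space of abstract Uryson operators exists and satisfies (T ∨ S)(f) = sup{ Tg + Sh : f = g + h, g ⊥ h }. -/

import Mathlib

/-!
The supremum is `R f = sup {T g + S h : f = g + h, g ⊥ h}`; the set is bounded above because
`|g|, |h| ≤ |f|` and `T`, `S` are order bounded. Taking `h = 0` or `g = 0` shows `T, S ≤ R`, and
`T g + S h ≤ U g + U h = U f` shows `R ≤ U` for every orthogonally additive majorant `U`.

The substance is orthogonal additivity of `R`. For `x ⊥ y`, the disjoint decompositions of `x + y`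
are exactly the sums of disjoint decompositions of `x` and of `y`, so the set for `x + y` is the
Minkowski sum of the sets for `x` and `y`, and suprema add. The nontrivial inclusion refines a
decomposition `x + y = g + h` by the components `z⁺ ⊓ |w| - z⁻ ⊓ |w|` of `z ∈ {g, h}` along
`w ∈ {x, y}`, which are additive over disjoint sums and split `z` whenever `|z| ≤ |x| + |y|`.
-/

/-- Orthogonal additivity: `T (x + y) = T x + T y` whenever `|x| ⊓ |y| = 0`. -/
def OrthAdd {E F : Type*} [Lattice E] [AddCommGroup E] [AddCommGroup F]
    (T : E → F) : Prop :=
  ∀ x y : E, |x| ⊓ |y| = 0 → T (x + y) = T x + T y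

/-- `T` maps order bounded sets to order bounded sets. -/
def OrderBoundedMap {E F : Type*} [Preorder E] [Preorder F] (T : E → F) : Prop :=
  ∀ a b : E, ∃ c d : F, ∀ x ∈ Set.Icc a b, T x ∈ Set.Icc c d

/-- An abstract Uryson operator: orthogonally additive and order bounded. -/
def Uryson {E F : Type*} [Lattice E] [AddCommGroup E] [Lattice F] [AddCommGroup F]
    (T : E → F) : Prop :=
  OrthAdd T ∧ OrderBoundedMap T

/-- `z` is a fragment (component) of `x`: `z ⊥ (x - z)`. -/
def Fragment {E : Type*} [Lattice E] [AddCommGroup E] (z x : E) : Prop :=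
  |z| ⊓ |x - z| = 0

lemma inf_eq_zero_of_le_of_le {G : Type*} [Lattice G] [Zero G] {a b a' b' : G}
    (ha' : 0 ≤ a') (hb' : 0 ≤ b') (ha : a' ≤ a) (hb : b' ≤ b) (h : a ⊓ b = 0) : a' ⊓ b' = 0 :=
  le_antisymm ((inf_le_inf ha hb).trans h.le) (le_inf ha' hb')

section Disjointness

variable {G : Type*} [Lattice G] [AddCommGroup G] [AddLeftMono G]

lemma posPart_le_abs (a : G) : a⁺ ≤ |a| :=
  (le_add_of_nonneg_right (negPart_nonneg a)).trans (posPart_add_negPart a).le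

lemma negPart_le_abs (a : G) : a⁻ ≤ |a| :=
  (le_add_of_nonneg_left (posPart_nonneg a)).trans (posPart_add_negPart a).le

lemma add_inf_eq_zero {a b c : G} (ha : 0 ≤ a) (hb : 0 ≤ b) (hc : 0 ≤ c)
    (hac : a ⊓ c = 0) (hbc : b ⊓ c = 0) : (a + b) ⊓ c = 0 := by
  have hle_b : (a + b) ⊓ c ≤ b := by
    calc (a + b) ⊓ c ≤ (a + b) ⊓ (c + b) := inf_le_inf_left _ (le_add_of_nonneg_right hb)
      _ = a ⊓ c + b := (inf_add a c b).symm
      _ = b := by rw [hac, zero_add]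
  refine le_antisymm ?_ (le_inf (add_nonneg ha hb) hc)
  exact hbc ▸ le_inf hle_b inf_le_right

lemma inf_add_eq_zero {a b c : G} (ha : 0 ≤ a) (hb : 0 ≤ b) (hc : 0 ≤ c)
    (hab : a ⊓ b = 0) (hac : a ⊓ c = 0) : a ⊓ (b + c) = 0 := by
  rw [inf_comm] at hab hac ⊢
  exact add_inf_eq_zero hb hc ha hab hac

lemma abs_le_sup_abs_abs {a b x : G} (hax : a ≤ x) (hxb : x ≤ b) : |x| ≤ |a| ⊔ |b| :=
  abs_le'.2 ⟨hxb.trans ((le_abs_self b).trans le_sup_right),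
    (neg_le_neg_iff.mpr hax).trans ((neg_le_abs a).trans le_sup_left)⟩

lemma sup_eq_add_of_inf_eq_zero {p q : G} (h : p ⊓ q = 0) : p ⊔ q = p + q := by
  simpa [h] using inf_add_sup p q

lemma posPart_sub_of_inf_eq_zero {p q : G} (h : p ⊓ q = 0) : (p - q)⁺ = p := by
  rw [posPart_def, ← sub_self q, ← sup_sub, sup_eq_add_of_inf_eq_zero h, add_sub_cancel_right]

lemma negPart_sub_of_inf_eq_zero {p q : G} (h : p ⊓ q = 0) : (p - q)⁻ = q := by
  rw [← posPart_neg, neg_sub, posPart_sub_of_inf_eq_zero (inf_comm p q ▸ h)]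

lemma abs_sub_of_inf_eq_zero {p q : G} (h : p ⊓ q = 0) : |p - q| = p + q := by
  rw [← posPart_add_negPart, posPart_sub_of_inf_eq_zero h, negPart_sub_of_inf_eq_zero h]

lemma inf_add_inf_of_inf_eq_zero {p q r : G} (hp : 0 ≤ p) (hq : 0 ≤ q) (hr : 0 ≤ r)
    (hpq : p ⊓ q = 0) : p ⊓ r + q ⊓ r = (p + q) ⊓ r := by
  let _ := AddCommGroup.toDistribLattice G
  have hd : (p ⊓ r) ⊓ (q ⊓ r) = 0 :=
    inf_eq_zero_of_le_of_le (le_inf hp hr) (le_inf hq hr) inf_le_left inf_le_left hpq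
  rw [← sup_eq_add_of_inf_eq_zero hd, ← inf_sup_right, sup_eq_add_of_inf_eq_zero hpq]

end Disjointness

section DisjointSum

variable {G : Type*} [Lattice G] [AddCommGroup G] [AddLeftMono G] {a b : G}

lemma posPart_add_posPart_inf_negPart_add_negPart (h : |a| ⊓ |b| = 0) :
    (a⁺ + b⁺) ⊓ (a⁻ + b⁻) = 0 := by
  have hab : a⁺ ⊓ b⁻ = 0 :=
    inf_eq_zero_of_le_of_le (posPart_nonneg a) (negPart_nonneg b)
      (posPart_le_abs a) (negPart_le_abs b) h
  have hba : b⁺ ⊓ a⁻ = 0 :=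
    inf_eq_zero_of_le_of_le (posPart_nonneg b) (negPart_nonneg a)
      (posPart_le_abs b) (negPart_le_abs a) (inf_comm |a| |b| ▸ h)
  have hneg : 0 ≤ a⁻ + b⁻ := add_nonneg (negPart_nonneg a) (negPart_nonneg b)
  refine add_inf_eq_zero (posPart_nonneg a) (posPart_nonneg b) hneg ?_ ?_
  · exact inf_add_eq_zero (posPart_nonneg a) (negPart_nonneg a) (negPart_nonneg b)
      (posPart_inf_negPart_eq_zero a) hab
  · exact inf_add_eq_zero (posPart_nonneg b) (negPart_nonneg a) (negPart_nonneg b)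
      hba (posPart_inf_negPart_eq_zero b)

lemma add_eq_posPart_add_posPart_sub : a + b = (a⁺ + b⁺) - (a⁻ + b⁻) := by
  rw [add_sub_add_comm, posPart_sub_negPart, posPart_sub_negPart]

lemma posPart_add_of_disjoint (h : |a| ⊓ |b| = 0) : (a + b)⁺ = a⁺ + b⁺ := by
  rw [add_eq_posPart_add_posPart_sub,
    posPart_sub_of_inf_eq_zero (posPart_add_posPart_inf_negPart_add_negPart h)]

lemma negPart_add_of_disjoint (h : |a| ⊓ |b| = 0) : (a + b)⁻ = a⁻ + b⁻ := by
  rw [add_eq_posPart_add_posPart_sub,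
    negPart_sub_of_inf_eq_zero (posPart_add_posPart_inf_negPart_add_negPart h)]

lemma abs_add_of_disjoint (h : |a| ⊓ |b| = 0) : |a + b| = |a| + |b| := by
  rw [← posPart_add_negPart, posPart_add_of_disjoint h, negPart_add_of_disjoint h,
    ← posPart_add_negPart a, ← posPart_add_negPart b, add_add_add_comm]

lemma abs_le_abs_add_of_disjoint (h : |a| ⊓ |b| = 0) : |a| ≤ |a + b| :=
  (le_add_of_nonneg_right (abs_nonneg b)).trans (abs_add_of_disjoint h).ge

lemma abs_le_abs_add_of_disjoint' (h : |a| ⊓ |b| = 0) : |b| ≤ |a + b| :=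
  (le_add_of_nonneg_left (abs_nonneg a)).trans (abs_add_of_disjoint h).ge

lemma abs_add_inf_abs_add_eq_zero {g₁ g₂ h₁ h₂ : G} (h11 : |g₁| ⊓ |h₁| = 0)
    (h12 : |g₁| ⊓ |h₂| = 0) (h21 : |g₂| ⊓ |h₁| = 0) (h22 : |g₂| ⊓ |h₂| = 0) :
    |g₁ + g₂| ⊓ |h₁ + h₂| = 0 := by
  have hsum : (|g₁| + |g₂|) ⊓ (|h₁| + |h₂|) = 0 :=
    add_inf_eq_zero (abs_nonneg _) (abs_nonneg _) (add_nonneg (abs_nonneg _) (abs_nonneg _))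
      (inf_add_eq_zero (abs_nonneg _) (abs_nonneg _) (abs_nonneg _) h11 h12)
      (inf_add_eq_zero (abs_nonneg _) (abs_nonneg _) (abs_nonneg _) h21 h22)
  exact inf_eq_zero_of_le_of_le (abs_nonneg _) (abs_nonneg _) (abs_add_le _ _) (abs_add_le _ _)
    hsum

end DisjointSum

section ComponentAlong

variable {G : Type*} [Lattice G] [AddCommGroup G] [AddLeftMono G]

def componentAlong (w z : G) : G :=
  z⁺ ⊓ |w| - z⁻ ⊓ |w|

lemma abs_componentAlong (w z : G) : |componentAlong w z| = |z| ⊓ |w| := by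
  have hd : (z⁺ ⊓ |w|) ⊓ (z⁻ ⊓ |w|) = 0 :=
    inf_eq_zero_of_le_of_le (le_inf (posPart_nonneg z) (abs_nonneg w))
      (le_inf (negPart_nonneg z) (abs_nonneg w)) inf_le_left inf_le_left
      (posPart_inf_negPart_eq_zero z)
  rw [componentAlong, abs_sub_of_inf_eq_zero hd, inf_add_inf_of_inf_eq_zero (posPart_nonneg z)
    (negPart_nonneg z) (abs_nonneg w) (posPart_inf_negPart_eq_zero z), posPart_add_negPart]

lemma componentAlong_add_of_disjoint (w : G) {g h : G} (hgh : |g| ⊓ |h| = 0) :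
    componentAlong w (g + h) = componentAlong w g + componentAlong w h := by
  have hpos : g⁺ ⊓ h⁺ = 0 := inf_eq_zero_of_le_of_le (posPart_nonneg g) (posPart_nonneg h)
    (posPart_le_abs g) (posPart_le_abs h) hgh
  have hneg : g⁻ ⊓ h⁻ = 0 := inf_eq_zero_of_le_of_le (negPart_nonneg g) (negPart_nonneg h)
    (negPart_le_abs g) (negPart_le_abs h) hgh
  rw [componentAlong, componentAlong, componentAlong, posPart_add_of_disjoint hgh,
    negPart_add_of_disjoint hgh, sub_add_sub_comm,
    inf_add_inf_of_inf_eq_zero (posPart_nonneg g) (posPart_nonneg h) (abs_nonneg w) hpos,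
    inf_add_inf_of_inf_eq_zero (negPart_nonneg g) (negPart_nonneg h) (abs_nonneg w) hneg]

lemma componentAlong_self (x : G) : componentAlong x x = x := by
  rw [componentAlong, inf_eq_left.2 (posPart_le_abs x), inf_eq_left.2 (negPart_le_abs x),
    posPart_sub_negPart]

lemma componentAlong_eq_zero_of_disjoint {x y : G} (hxy : |x| ⊓ |y| = 0) :
    componentAlong x y = 0 := by
  have hyx : |y| ⊓ |x| = 0 := inf_comm |x| |y| ▸ hxy
  rw [componentAlong,
    inf_eq_zero_of_le_of_le (posPart_nonneg y) (abs_nonneg x) (posPart_le_abs y) le_rfl hyx,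
    inf_eq_zero_of_le_of_le (negPart_nonneg y) (abs_nonneg x) (negPart_le_abs y) le_rfl hyx,
    sub_zero]

lemma componentAlong_add_self_of_disjoint {x y : G} (hxy : |x| ⊓ |y| = 0) :
    componentAlong x (x + y) = x := by
  rw [componentAlong_add_of_disjoint x hxy, componentAlong_self,
    componentAlong_eq_zero_of_disjoint hxy, add_zero]

lemma inf_abs_add_inf_abs_of_le {x y c : G} (hxy : |x| ⊓ |y| = 0) (hc : 0 ≤ c)
    (hcle : c ≤ |x| + |y|) : c ⊓ |x| + c ⊓ |y| = c := by
  rw [inf_comm c, inf_comm c, inf_add_inf_of_inf_eq_zero (abs_nonneg x) (abs_nonneg y) hc hxy,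
    inf_eq_right.2 hcle]

lemma componentAlong_add_componentAlong {x y z : G} (hxy : |x| ⊓ |y| = 0)
    (hz : |z| ≤ |x| + |y|) : componentAlong x z + componentAlong y z = z := by
  rw [componentAlong, componentAlong, sub_add_sub_comm,
    inf_abs_add_inf_abs_of_le hxy (posPart_nonneg z) ((posPart_le_abs z).trans hz),
    inf_abs_add_inf_abs_of_le hxy (negPart_nonneg z) ((negPart_le_abs z).trans hz),
    posPart_sub_negPart]

lemma exists_disjoint_refinement {x y g h : G} (hxy : |x| ⊓ |y| = 0) (hgh : |g| ⊓ |h| = 0)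
    (hsum : g + h = x + y) :
    ∃ g₁ g₂ h₁ h₂ : G, g = g₁ + g₂ ∧ h = h₁ + h₂ ∧ x = g₁ + h₁ ∧ y = g₂ + h₂ ∧
      |g₁| ⊓ |g₂| = 0 ∧ |h₁| ⊓ |h₂| = 0 ∧ |g₁| ⊓ |h₁| = 0 ∧ |g₂| ⊓ |h₂| = 0 := by
  have habs : |g + h| = |x| + |y| := by rw [hsum, abs_add_of_disjoint hxy]
  have hcomp : ∀ w, |componentAlong w g| ⊓ |componentAlong w h| = 0 := fun w => by
    rw [abs_componentAlong, abs_componentAlong]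
    exact inf_eq_zero_of_le_of_le (le_inf (abs_nonneg g) (abs_nonneg w))
      (le_inf (abs_nonneg h) (abs_nonneg w)) inf_le_left inf_le_left hgh
  have hsplit : ∀ z, |componentAlong x z| ⊓ |componentAlong y z| = 0 := fun z => by
    rw [abs_componentAlong, abs_componentAlong]
    exact inf_eq_zero_of_le_of_le (le_inf (abs_nonneg z) (abs_nonneg x))
      (le_inf (abs_nonneg z) (abs_nonneg y)) inf_le_right inf_le_right hxy
  refine ⟨componentAlong x g, componentAlong y g, componentAlong x h, componentAlong y h,
    ?_, ?_, ?_, ?_, hsplit g, hsplit h, hcomp x, hcomp y⟩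
  · exact (componentAlong_add_componentAlong hxy (habs ▸ abs_le_abs_add_of_disjoint hgh)).symm
  · exact (componentAlong_add_componentAlong hxy (habs ▸ abs_le_abs_add_of_disjoint' hgh)).symm
  · rw [← componentAlong_add_of_disjoint x hgh, hsum, componentAlong_add_self_of_disjoint hxy]
  · rw [← componentAlong_add_of_disjoint y hgh, hsum, add_comm,
      componentAlong_add_self_of_disjoint (inf_comm |x| |y| ▸ hxy)]

end ComponentAlong

section Uryson

variable {E F : Type*} [Lattice E] [AddCommGroup E] [AddLeftMono E]

lemma OrthAdd.map_zero [AddCommGroup F] {T : E → F} (hT : OrthAdd T) : T 0 = 0 := by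
  simpa using hT 0 0 (by simp)

lemma OrderBoundedMap.exists_bounds_of_abs_le [Preorder F] {T : E → F}
    (hT : OrderBoundedMap T) (a : E) : ∃ c d : F, ∀ x, |x| ≤ a → c ≤ T x ∧ T x ≤ d := by
  obtain ⟨c, d, hcd⟩ := hT (-a) a
  exact ⟨c, d, fun x hx => hcd x ⟨neg_le.mp ((neg_le_abs x).trans hx), (le_abs_self x).trans hx⟩⟩

variable [AddCommGroup F]

def disjointSplitSums (T S : E → F) (f : E) : Set F :=
  {v : F | ∃ g h : E, f = g + h ∧ |g| ⊓ |h| = 0 ∧ v = T g + S h}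

variable {T S : E → F}

lemma disjointSplitSums_nonempty (T S : E → F) (f : E) : (disjointSplitSums T S f).Nonempty :=
  ⟨T f + S 0, f, 0, (add_zero f).symm, by simp, rfl⟩

lemma apply_mem_disjointSplitSums_left (hS : S 0 = 0) (f : E) :
    T f ∈ disjointSplitSums T S f :=
  ⟨f, 0, (add_zero f).symm, by simp, by rw [hS, add_zero]⟩

lemma apply_mem_disjointSplitSums_right (hT : T 0 = 0) (f : E) :
    S f ∈ disjointSplitSums T S f :=
  ⟨0, f, (zero_add f).symm, by simp, by rw [hT, zero_add]⟩

open scoped Pointwise in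
lemma disjointSplitSums_add (hT : OrthAdd T) (hS : OrthAdd S) {x y : E}
    (hxy : |x| ⊓ |y| = 0) :
    disjointSplitSums T S (x + y) = disjointSplitSums T S x + disjointSplitSums T S y := by
  ext v
  constructor
  · rintro ⟨g, h, hsum, hgh, rfl⟩
    obtain ⟨g₁, g₂, h₁, h₂, rfl, rfl, hx, hy, hg, hh, hgh₁, hgh₂⟩ :=
      exists_disjoint_refinement hxy hgh hsum.symm
    refine Set.mem_add.2
      ⟨T g₁ + S h₁, ⟨g₁, h₁, hx, hgh₁, rfl⟩, T g₂ + S h₂, ⟨g₂, h₂, hy, hgh₂, rfl⟩, ?_⟩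
    rw [hT g₁ g₂ hg, hS h₁ h₂ hh]
    abel
  · rw [Set.mem_add]
    rintro ⟨_, ⟨g₁, h₁, rfl, hgh₁, rfl⟩, _, ⟨g₂, h₂, rfl, hgh₂, rfl⟩, rfl⟩
    have hdisj : ∀ {a b : E}, |a| ≤ |g₁ + h₁| → |b| ≤ |g₂ + h₂| → |a| ⊓ |b| = 0 :=
      fun ha hb => inf_eq_zero_of_le_of_le (abs_nonneg _) (abs_nonneg _) ha hb hxy
    have hg₁ := abs_le_abs_add_of_disjoint hgh₁
    have hh₁ := abs_le_abs_add_of_disjoint' hgh₁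
    have hg₂ := abs_le_abs_add_of_disjoint hgh₂
    have hh₂ := abs_le_abs_add_of_disjoint' hgh₂
    refine ⟨g₁ + g₂, h₁ + h₂, by abel, ?_, ?_⟩
    · exact abs_add_inf_abs_add_eq_zero hgh₁ (hdisj hg₁ hh₂)
        (inf_comm |h₁| |g₂| ▸ hdisj hh₁ hg₂) hgh₂
    · rw [hT g₁ g₂ (hdisj hg₁ hg₂), hS h₁ h₂ (hdisj hh₁ hh₂)]
      abel

variable [Lattice F] [AddLeftMono F]

lemma le_of_mem_disjointSplitSums {c : E} {dT dS : F} (hT : ∀ x, |x| ≤ c → T x ≤ dT)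
    (hS : ∀ x, |x| ≤ c → S x ≤ dS) {f : E} (hf : |f| ≤ c) :
    ∀ v ∈ disjointSplitSums T S f, v ≤ dT + dS := by
  rintro _ ⟨g, h, rfl, hgh, rfl⟩
  exact add_le_add (hT g ((abs_le_abs_add_of_disjoint hgh).trans hf))
    (hS h ((abs_le_abs_add_of_disjoint' hgh).trans hf))

lemma bddAbove_disjointSplitSums (hT : OrderBoundedMap T) (hS : OrderBoundedMap S) (f : E) :
    BddAbove (disjointSplitSums T S f) := by
  obtain ⟨_, dT, hdT⟩ := hT.exists_bounds_of_abs_le |f|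
  obtain ⟨_, dS, hdS⟩ := hS.exists_bounds_of_abs_le |f|
  exact ⟨dT + dS, le_of_mem_disjointSplitSums (fun x hx => (hdT x hx).2)
    (fun x hx => (hdS x hx).2) le_rfl⟩

end Uryson

section UrysonSup

variable {E F : Type*} [Lattice E] [AddCommGroup E] [AddLeftMono E]
  [ConditionallyCompleteLattice F] [AddCommGroup F] [AddLeftMono F] {T S : E → F}

def urysonSup (T S : E → F) (f : E) : F :=
  sSup (disjointSplitSums T S f)

lemma le_urysonSup_left (hT : Uryson T) (hS : Uryson S) (f : E) : T f ≤ urysonSup T S f :=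
  le_csSup (bddAbove_disjointSplitSums hT.2 hS.2 f)
    (apply_mem_disjointSplitSums_left hS.1.map_zero f)

lemma le_urysonSup_right (hT : Uryson T) (hS : Uryson S) (f : E) : S f ≤ urysonSup T S f :=
  le_csSup (bddAbove_disjointSplitSums hT.2 hS.2 f)
    (apply_mem_disjointSplitSums_right hT.1.map_zero f)

lemma urysonSup_le {U : E → F} (hU : OrthAdd U) (hTU : ∀ x, T x ≤ U x) (hSU : ∀ x, S x ≤ U x)
    (f : E) : urysonSup T S f ≤ U f := by
  refine csSup_le (disjointSplitSums_nonempty T S f) ?_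
  rintro _ ⟨g, h, rfl, hgh, rfl⟩
  exact (add_le_add (hTU g) (hSU h)).trans (hU g h hgh).ge

lemma orthAdd_urysonSup (hT : Uryson T) (hS : Uryson S) : OrthAdd (urysonSup T S) := by
  intro x y hxy
  have hne := disjointSplitSums_nonempty T S
  have hbdd := bddAbove_disjointSplitSums hT.2 hS.2
  rw [urysonSup, disjointSplitSums_add hT.1 hS.1 hxy, csSup_add (hne x) (hbdd x) (hne y) (hbdd y)]
  rfl

lemma orderBoundedMap_urysonSup (hT : Uryson T) (hS : Uryson S) :
    OrderBoundedMap (urysonSup T S) := by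
  intro a b
  obtain ⟨cT, dT, hT'⟩ := hT.2.exists_bounds_of_abs_le (|a| ⊔ |b|)
  obtain ⟨_, dS, hS'⟩ := hS.2.exists_bounds_of_abs_le (|a| ⊔ |b|)
  refine ⟨cT, dT + dS, fun x hx => ⟨?_, ?_⟩⟩
  · exact (hT' x (abs_le_sup_abs_abs hx.1 hx.2)).1.trans (le_urysonSup_left hT hS x)
  · exact csSup_le (disjointSplitSums_nonempty T S x)
      (le_of_mem_disjointSplitSums (fun y hy => (hT' y hy).2) (fun y hy => (hS' y hy).2)
        (abs_le_sup_abs_abs hx.1 hx.2))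

end UrysonSup

theorem stmt3_general {E F : Type*} [Lattice E] [AddCommGroup E]
    [CovariantClass E E (· + ·) (· ≤ ·)]
    [ConditionallyCompleteLattice F] [AddCommGroup F]
    [CovariantClass F F (· + ·) (· ≤ ·)]
    (S T : E → F) (hS : Uryson S) (hT : Uryson T) :
    ∃ R : E → F, Uryson R ∧
      (∀ x, T x ≤ R x) ∧ (∀ x, S x ≤ R x) ∧
      (∀ U : E → F, Uryson U → (∀ x, T x ≤ U x) → (∀ x, S x ≤ U x) → ∀ x, R x ≤ U x) ∧
      ∀ f : E, R f = sSup {v : F | ∃ g h : E, f = g + h ∧ |g| ⊓ |h| = 0 ∧ v = T g + S h} :=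
  ⟨urysonSup T S, ⟨orthAdd_urysonSup hT hS, orderBoundedMap_urysonSup hT hS⟩,
    le_urysonSup_left hT hS, le_urysonSup_right hT hS,
    fun _ hU hTU hSU => urysonSup_le hU.1 hTU hSU, fun _ => rfl⟩

/-- Mazón–Segura de León: if `F` is Dedekind complete then for abstract Uryson operators
`S, T : E → F` the supremum `T ∨ S` exists in the ordered vector space `U(E,F)`
(ordered by `S ≤ T` iff `T - S` is positive, i.e. pointwise) and
`(T ∨ S)(f) = sup { T g + S h : f = g + h, g ⊥ h }`. -/
theorem stmt3 {E F : Type*} [Lattice E] [AddCommGroup E]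
    [CovariantClass E E (· + ·) (· ≤ ·)] [Module ℝ E]
    [ConditionallyCompleteLattice F] [AddCommGroup F]
    [CovariantClass F F (· + ·) (· ≤ ·)] [Module ℝ F]
    (S T : E → F) (hS : Uryson S) (hT : Uryson T) :
    ∃ R : E → F, Uryson R ∧
      (∀ x, T x ≤ R x) ∧ (∀ x, S x ≤ R x) ∧
      (∀ U : E → F, Uryson U → (∀ x, T x ≤ U x) → (∀ x, S x ≤ U x) → ∀ x, R x ≤ U x) ∧
      ∀ f : E, R f = sSup {v : F | ∃ g h : E, f = g + h ∧ |g| ⊓ |h| = 0 ∧ v = T g + S h} :=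
  stmt3_general S T hS hT
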